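/- arXiv:2007.12009 — 7 statements merged into one kernel-verified Lean document; each statement's English description precedes it below -/
import Mathlib

section
/- Let r ≥ 3 and let δ ∈ (0, 1) satisfy (2 - δ)^r = 2/δ - 2 + δ. Then rδ < 1. -/
/-!
Put `x = 1 - δ`; the equation reads `δ (1 + x) ^ r = 1 + x ^ 2`. If `r δ ≥ 1`, the binomial
expansion of `(1 + x) ^ r`, truncated after its quadratic term, already gives
`δ (1 + x) ^ r > δ + r δ x + (r - 1) / 2 · r δ x ^ 2 ≥ δ + x + x ^ 2 = 1 + x ^ 2`,
the strict inequality coming from the cubic term, which is present because `r ≥ 3`.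
-/

open Finset

theorem one_add_mul_add_choose_two_mul_sq_lt_pow {R : Type*} [CommSemiring R] [PartialOrder R]
    [IsStrictOrderedRing R] {x : R} (hx : 0 < x) {n : ℕ} (hn : 3 ≤ n) :
    1 + n * x + n.choose 2 * x ^ 2 < (1 + x) ^ n := by
  have htruncated : ∑ m ∈ range 3, x ^ m * 1 ^ (n - m) * n.choose m
      = 1 + n * x + n.choose 2 * x ^ 2 := by
    simp only [sum_range_succ, sum_range_zero, one_pow, mul_one, pow_zero, pow_one,
      Nat.choose_zero_right, Nat.choose_one_right, Nat.cast_one, zero_add]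
    ring
  rw [← htruncated, add_comm 1 x, add_pow]
  refine sum_lt_sum_of_subset (range_subset_range.2 (by omega)) (i := 3)
    (mem_range.2 (by omega)) (by simp) ?_ fun m _ _ ↦ by positivity
  have : 0 < n.choose 3 := Nat.choose_pos hn
  positivity

theorem one_add_sq_lt_mul_two_sub_pow {r : ℕ} (hr : 3 ≤ r) {δ : ℝ} (hδ : δ < 1)
    (hrδ : 1 ≤ r * δ) : 1 + (1 - δ) ^ 2 < δ * (2 - δ) ^ r := by
  set x := 1 - δ
  have hδ0 : 0 < δ := by
    by_contra! h
    nlinarith [(Nat.cast_nonneg r : (0 : ℝ) ≤ r)]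
  have hbinom := one_add_mul_add_choose_two_mul_sq_lt_pow (show 0 < x by linarith) hr
  rw [Nat.cast_choose_two] at hbinom
  have hr' : (3 : ℝ) ≤ r := by exact_mod_cast hr
  calc 1 + x ^ 2
      ≤ δ * (1 + r * x + r * (r - 1) / 2 * x ^ 2) := by
        nlinarith [sq_nonneg x, mul_nonneg (sub_nonneg.2 hrδ) (sq_nonneg x),
          mul_nonneg (sub_nonneg.2 hrδ) (sub_nonneg.2 hδ.le)]
    _ < δ * (2 - δ) ^ r := by
        rw [show 2 - δ = 1 + x by ring]
        exact mul_lt_mul_of_pos_left hbinom hδ0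

theorem stmt4 (r : ℕ) (hr : 3 ≤ r) (δ : ℝ) (hδ : δ ∈ Set.Ioo (0 : ℝ) 1)
    (heq : (2 - δ) ^ r = 2 / δ - 2 + δ) : (r : ℝ) * δ < 1 := by
  obtain ⟨hδ0, hδ1⟩ := hδ
  by_contra! hrδ
  have hpoly : δ * (2 - δ) ^ r = 1 + (1 - δ) ^ 2 := by
    rw [heq]
    field_simp
    ring
  exact (one_add_sq_lt_mul_two_sub_pow hr hδ1 hrδ).ne' hpoly
end

section
/- Let f_a(x) = 1 - a|x| with a ∈ [√2, 2] and c_n(a) = f_a^n(0). Suppose J ⊂ [√2, 2] is an interval such that c_k(a) ≠ 0 for all a in the interior of J and all 1 ≤ k < n (for some n ≥ 2). Then for all a ∈ J, the sign of the derivative of a ↦ c_n(a) equals the sign of (f_a^{n-1})'(c_1(a)), where (f_a^{n-1})'(c_1) = ∏_{k=1}^{n-1} (-a·sgn(c_k(a))). -/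
noncomputable def tent (a x : ℝ) : ℝ := 1 - a * |x|

/-!
On each side of a parameter `a`, `c_k` is eventually of constant sign `ε_k` (read off the
one-sided derivative where `c_k(a) = 0`), so `c_{k+1}(b) = 1 - b ε_k c_k(b)` there and the
one-sided derivatives obey `D_{k+1} = -ε_k (c_k + a D_k)`. With `P_k = ∏_{1 ≤ j < k} (-ε_j)` this
gives `P_{k+1} D_{k+1} ≥ a P_k D_k - |c_k|`, and for `a ≥ √2` the pair `P_k D_k ≥ 1`,
`a (P_k D_k + |c_{k-1}|) ≥ 2` propagates from `k = 2`; hence `D_n ≠ 0` and `sign D_n = P_n`.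
If no `c_k(a)`, `1 ≤ k < n`, vanishes, both sides use the same `ε_k` and `P_n` is the sign of the
spatial derivative. Otherwise `c_{k+1}` has a corner at `a` (`D⁺ < 0 < D⁻`), the two one-sided
derivatives of `c_n` stay different, and `c_n` is not differentiable at `a`: both sides of the
claim are `0`, the left one through Mathlib's convention `deriv f a = 0`.
-/

open Set Topology

lemma sign_mul_of_eq_one_or {s x : ℝ} (hs : s = 1 ∨ s = -1) (hx : 0 < x) :
    Real.sign (s * x) = s := by
  rcases hs with rfl | rfl
  · simpa using Real.sign_of_pos hx
  · simpa using Real.sign_of_neg (neg_neg_of_pos hx)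

lemma abs_eq_mul_of_nonneg {ε c : ℝ} (hε : ε = 1 ∨ ε = -1) (h : 0 ≤ ε * c) : |c| = ε * c := by
  rcases hε with rfl | rfl
  · rw [one_mul] at h ⊢
    exact abs_of_nonneg h
  · rw [neg_one_mul] at h ⊢
    exact abs_of_nonpos (neg_nonneg.mp h)

lemma eventually_nonneg_mul_of_hasDerivWithinAt {f : ℝ → ℝ} {S : Set ℝ} {a d τ : ℝ}
    (hf : HasDerivWithinAt f d S a) (hfa : f a = 0) (hS : ∀ b ∈ S, 0 ≤ τ * (b - a)) :
    ∀ᶠ b in 𝓝[S] a, 0 ≤ τ * d * f b := by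
  rcases eq_or_ne d 0 with rfl | hd
  · simp
  have hslope : ∀ᶠ b in 𝓝[S \ {a}] a, 0 < d * slope f a b :=
    ((hasDerivWithinAt_iff_tendsto_slope.mp hf).const_mul d).eventually_const_lt
      (mul_self_pos.mpr hd)
  rw [eventually_nhdsWithin_iff] at hslope ⊢
  filter_upwards [hslope] with b hb hbS
  rcases eq_or_ne b a with rfl | hba
  · simp [hfa]
  · have hfb : f b = (b - a) * slope f a b := by
      rw [← smul_eq_mul, sub_smul_slope, vsub_eq_sub, hfa, sub_zero]
    calc 0 ≤ τ * (b - a) * (d * slope f a b) := mul_nonneg (hS b hbS) (hb ⟨hbS, hba⟩).le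
      _ = τ * d * f b := by rw [hfb]; ring

namespace TentMap

noncomputable def critOrbit (k : ℕ) (a : ℝ) : ℝ := (tent a)^[k] 0

@[simp] lemma critOrbit_zero (a : ℝ) : critOrbit 0 a = 0 := rfl

lemma critOrbit_succ (k : ℕ) (a : ℝ) : critOrbit (k + 1) a = 1 - a * |critOrbit k a| :=
  Function.iterate_succ_apply' (tent a) k 0

@[simp] lemma critOrbit_one (a : ℝ) : critOrbit 1 a = 1 := by simp [critOrbit_succ]

lemma abs_critOrbit_le_one {a : ℝ} (ha : a ∈ Icc (0 : ℝ) 2) (k : ℕ) : |critOrbit k a| ≤ 1 := by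
  induction k with
  | zero => simp
  | succ k ih =>
    rw [critOrbit_succ, abs_le]
    constructor <;> nlinarith [abs_nonneg (critOrbit k a), ha.1, ha.2]

/-- The sign of `c_k(b)` for `b` near `a` on the side `τ` (`1`: right, `-1`: left), where
`c = c_k(a)`; at `c = 0` it is read off the one-sided derivative `d` of `c_k` at `a`. -/
noncomputable def sideSign (τ c d : ℝ) : ℝ :=
  if c = 0 then (if 0 < d then τ else -τ) else Real.sign c

lemma sideSign_eq_one_or {τ : ℝ} (hτ : τ = 1 ∨ τ = -1) (c d : ℝ) :
    sideSign τ c d = 1 ∨ sideSign τ c d = -1 := by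
  unfold sideSign
  split_ifs with hc
  · rcases hτ with rfl | rfl <;> simp
  · rcases hτ with rfl | rfl <;> simp
  · exact (Real.sign_apply_eq_of_ne_zero c hc).symm

noncomputable def sideDeriv (a τ : ℝ) : ℕ → ℝ
  | 0 => 0
  | k + 1 => -sideSign τ (critOrbit k a) (sideDeriv a τ k) * (critOrbit k a + a * sideDeriv a τ k)

noncomputable def itinerary (a τ : ℝ) (k : ℕ) : ℝ := sideSign τ (critOrbit k a) (sideDeriv a τ k)

noncomputable def itineraryProd (a τ : ℝ) (m : ℕ) : ℝ := ∏ j ∈ Finset.Ico 1 m, -itinerary a τ j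

section Itinerary

variable {a τ : ℝ}

lemma sideDeriv_succ (k : ℕ) :
    sideDeriv a τ (k + 1) = -itinerary a τ k * (critOrbit k a + a * sideDeriv a τ k) := rfl

@[simp] lemma sideDeriv_one : sideDeriv a τ 1 = 0 := by simp [sideDeriv]

lemma itinerary_of_ne_zero {k : ℕ} (hc : critOrbit k a ≠ 0) :
    itinerary a τ k = Real.sign (critOrbit k a) := if_neg hc

lemma itinerary_eq_one_or (hτ : τ = 1 ∨ τ = -1) (k : ℕ) :
    itinerary a τ k = 1 ∨ itinerary a τ k = -1 :=
  sideSign_eq_one_or hτ _ _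

lemma itineraryProd_eq_one_or (hτ : τ = 1 ∨ τ = -1) (m : ℕ) :
    itineraryProd a τ m = 1 ∨ itineraryProd a τ m = -1 := by
  refine Finset.prod_induction _ (fun x => x = 1 ∨ x = -1) ?_ (Or.inl rfl) fun j _ => ?_
  · rintro x y (rfl | rfl) (rfl | rfl) <;> norm_num
  · rcases itinerary_eq_one_or (a := a) hτ j with h | h <;> simp [h]

lemma itineraryProd_mul_sideDeriv_succ (hτ : τ = 1 ∨ τ = -1) {k : ℕ} (hk : 1 ≤ k) :
    itineraryProd a τ (k + 1) * sideDeriv a τ (k + 1)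
      = itineraryProd a τ k * (critOrbit k a + a * sideDeriv a τ k) := by
  have hε : itinerary a τ k * itinerary a τ k = 1 := by
    rcases itinerary_eq_one_or (a := a) hτ k with h | h <;> simp [h]
  rw [itineraryProd, Finset.prod_Ico_succ_top hk, ← itineraryProd, sideDeriv_succ]
  linear_combination itineraryProd a τ k * (critOrbit k a + a * sideDeriv a τ k) * hε

end Itinerary

lemma expansion_step {a u x y : ℝ} (ha : a ∈ Icc (√2) 2) (hu : |u| ≤ 1) (hx : 1 ≤ x)
    (hxu : 2 ≤ a * (x + |u|)) (hy : a * x - |(1 - a * |u|)| ≤ y) :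
    1 ≤ y ∧ 2 ≤ a * (y + |(1 - a * |u|)|) := by
  have ha1 : 1 ≤ a := (Real.one_lt_sqrt_two).le.trans ha.1
  have ha_sq : 2 ≤ a ^ 2 := by
    simpa using pow_le_pow_left₀ (Real.sqrt_nonneg 2) ha.1 2
  constructor
  · rcases abs_cases (1 - a * |u|) with ⟨h, _⟩ | ⟨h, _⟩ <;> rw [h] at hy <;> nlinarith
  · nlinarith

section Expansion

variable {a τ : ℝ} (ha : a ∈ Icc (√2) 2) (hτ : τ = 1 ∨ τ = -1)
include ha hτ

lemma itineraryProd_mul_sideDeriv_ge (m : ℕ) :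
    1 ≤ itineraryProd a τ (m + 2) * sideDeriv a τ (m + 2) ∧
      2 ≤ a * (itineraryProd a τ (m + 2) * sideDeriv a τ (m + 2) + |critOrbit (m + 1) a|) := by
  have ha0 : a ∈ Icc (0 : ℝ) 2 := ⟨(Real.sqrt_nonneg 2).trans ha.1, ha.2⟩
  induction m with
  | zero =>
    have ha1 : 1 ≤ a := Real.one_lt_sqrt_two.le.trans ha.1
    rw [itineraryProd_mul_sideDeriv_succ hτ le_rfl, itineraryProd, Finset.Ico_self,
      Finset.prod_empty, critOrbit_one, sideDeriv_one, abs_one]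
    constructor <;> linarith
  | succ m ih =>
    set c := critOrbit (m + 2) a
    have hc : 1 - a * |critOrbit (m + 1) a| = c := (critOrbit_succ (m + 1) a).symm
    have hPc : -|c| ≤ itineraryProd a τ (m + 2) * c := by
      rcases itineraryProd_eq_one_or (a := a) hτ (m + 2) with h | h <;> rw [h] <;>
        linarith [neg_abs_le c, le_abs_self c]
    have key := expansion_step (y := itineraryProd a τ (m + 3) * sideDeriv a τ (m + 3)) ha
      (abs_critOrbit_le_one ha0 (m + 1)) ih.1 ih.2 (by
        rw [hc, itineraryProd_mul_sideDeriv_succ (k := m + 2) hτ (by omega)]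
        linarith)
    rwa [hc] at key

lemma sideDeriv_ne_zero {m : ℕ} (hm : 2 ≤ m) : sideDeriv a τ m ≠ 0 := by
  obtain ⟨m, rfl⟩ := Nat.exists_eq_add_of_le' hm
  intro h0
  have := (itineraryProd_mul_sideDeriv_ge ha hτ m).1
  rw [h0, mul_zero] at this
  linarith

lemma sign_sideDeriv {m : ℕ} (hm : 2 ≤ m) : Real.sign (sideDeriv a τ m) = itineraryProd a τ m := by
  obtain ⟨m, rfl⟩ := Nat.exists_eq_add_of_le' hm
  have hP := itineraryProd_eq_one_or (a := a) hτ (m + 2)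
  have hD : sideDeriv a τ (m + 2)
      = itineraryProd a τ (m + 2) * (itineraryProd a τ (m + 2) * sideDeriv a τ (m + 2)) := by
    rcases hP with h | h <;> rw [h] <;> ring
  rw [hD]
  exact sign_mul_of_eq_one_or hP (by linarith [(itineraryProd_mul_sideDeriv_ge ha hτ m).1])

end Expansion

section Derivative

variable {a τ : ℝ} {S : Set ℝ}

lemma itinerary_mul_critOrbit_nonneg (k : ℕ) : 0 ≤ itinerary a τ k * critOrbit k a := by
  by_cases hc : critOrbit k a = 0
  · simp [hc]
  · rw [itinerary_of_ne_zero hc]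
    exact Real.sign_mul_nonneg _

lemma hasDerivWithinAt_critOrbit_succ (hτ : τ = 1 ∨ τ = -1) {k : ℕ}
    (hder : HasDerivWithinAt (critOrbit k) (sideDeriv a τ k) S a)
    (hsgn : ∀ᶠ b in 𝓝[S] a, 0 ≤ itinerary a τ k * critOrbit k b) :
    HasDerivWithinAt (critOrbit (k + 1)) (sideDeriv a τ (k + 1)) S a := by
  set ε := itinerary a τ k
  have hε := itinerary_eq_one_or (a := a) hτ k
  have hlin :
      HasDerivWithinAt (fun b => 1 - b * (ε * critOrbit k b)) (sideDeriv a τ (k + 1)) S a := by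
    refine (((hasDerivWithinAt_id a S).mul (hder.const_mul ε)).const_sub 1).congr_deriv ?_
    rw [sideDeriv_succ, id]
    ring
  refine hlin.congr_of_eventuallyEq (hsgn.mono fun b hb => ?_) ?_
  · rw [critOrbit_succ, abs_eq_mul_of_nonneg hε hb]
  · rw [critOrbit_succ, abs_eq_mul_of_nonneg hε (itinerary_mul_critOrbit_nonneg k)]

lemma eventually_itinerary_mul_critOrbit_nonneg (ha : a ∈ Icc (√2) 2) (hτ : τ = 1 ∨ τ = -1)
    (hS : ∀ b ∈ S, 0 ≤ τ * (b - a)) {k : ℕ}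
    (hder : HasDerivWithinAt (critOrbit k) (sideDeriv a τ k) S a) :
    ∀ᶠ b in 𝓝[S] a, 0 ≤ itinerary a τ k * critOrbit k b := by
  by_cases hc : critOrbit k a = 0
  · rcases Nat.lt_or_ge k 2 with hk | hk
    · interval_cases k
      · simp
      · simp at hc
    set D := sideDeriv a τ k
    have hD : D ≠ 0 := sideDeriv_ne_zero ha hτ hk
    have hεD : τ * D = |D| * itinerary a τ k := by
      rw [itinerary, sideSign, if_pos hc]
      split_ifs with hpos
      · rw [abs_of_pos hpos]; ring
      · rw [abs_of_neg (lt_of_le_of_ne (not_lt.mp hpos) hD)]; ring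
    filter_upwards [eventually_nonneg_mul_of_hasDerivWithinAt hder hc hS] with b hb
    rw [hεD, mul_assoc] at hb
    exact (mul_nonneg_iff_of_pos_left (abs_pos.mpr hD)).mp hb
  · have hpos : 0 < itinerary a τ k * critOrbit k a := by
      rw [itinerary_of_ne_zero hc]
      exact Real.sign_mul_pos_of_ne_zero _ hc
    exact ((hder.continuousWithinAt.tendsto.const_mul _).eventually_const_lt hpos).mono
      fun b hb => hb.le

lemma hasDerivWithinAt_critOrbit (ha : a ∈ Icc (√2) 2) (hτ : τ = 1 ∨ τ = -1)
    (hS : ∀ b ∈ S, 0 ≤ τ * (b - a)) (k : ℕ) :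
    HasDerivWithinAt (critOrbit k) (sideDeriv a τ k) S a := by
  induction k with
  | zero => exact hasDerivWithinAt_const a S 0
  | succ k ih =>
    exact hasDerivWithinAt_critOrbit_succ hτ ih
      (eventually_itinerary_mul_critOrbit_nonneg ha hτ hS ih)

end Derivative

section Sides

variable {a : ℝ}

lemma sideDeriv_right_sub_left_succ {m : ℕ} (hc : critOrbit m a ≠ 0) :
    sideDeriv a 1 (m + 1) - sideDeriv a (-1) (m + 1)
      = -(Real.sign (critOrbit m a) * a) * (sideDeriv a 1 m - sideDeriv a (-1) m) := by
  rw [sideDeriv_succ, sideDeriv_succ, itinerary_of_ne_zero hc, itinerary_of_ne_zero hc]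
  ring

lemma sideDeriv_right_eq_left {n : ℕ} (h : ∀ k, 1 ≤ k → k < n → critOrbit k a ≠ 0) :
    sideDeriv a 1 n = sideDeriv a (-1) n := by
  induction n with
  | zero => rfl
  | succ n ih =>
    rcases Nat.eq_zero_or_pos n with rfl | hn
    · simp
    · have hsub := sideDeriv_right_sub_left_succ (h n hn (by omega))
      rwa [ih fun k hk hkn => h k hk (by omega), sub_self, mul_zero, sub_eq_zero] at hsub

lemma sideDeriv_succ_of_eq_zero {τ : ℝ} {m : ℕ} (hc : critOrbit m a = 0)
    (hD : sideDeriv a τ m ≠ 0) : sideDeriv a τ (m + 1) = -(τ * a * |sideDeriv a τ m|) := by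
  rw [sideDeriv_succ, itinerary, sideSign, if_pos hc, hc]
  split_ifs with hpos
  · rw [abs_of_pos hpos]; ring
  · rw [abs_of_neg (lt_of_le_of_ne (not_lt.mp hpos) hD)]; ring

variable (ha : a ∈ Icc (√2) 2)
include ha

lemma sideDeriv_right_lt_left_succ_of_eq_zero {m : ℕ} (hm : 2 ≤ m) (hc : critOrbit m a = 0) :
    sideDeriv a 1 (m + 1) < sideDeriv a (-1) (m + 1) := by
  have ha0 : 0 < a := (Real.sqrt_pos.mpr two_pos).trans_le ha.1
  have h1 := sideDeriv_ne_zero ha (τ := 1) (Or.inl rfl) hm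
  have h2 := sideDeriv_ne_zero ha (τ := -1) (Or.inr rfl) hm
  rw [sideDeriv_succ_of_eq_zero hc h1, sideDeriv_succ_of_eq_zero hc h2]
  nlinarith [mul_pos ha0 (abs_pos.mpr h1), mul_pos ha0 (abs_pos.mpr h2)]

lemma sideDeriv_right_ne_left {k n : ℕ} (hk : 1 ≤ k) (hc : critOrbit k a = 0) (hkn : k < n) :
    sideDeriv a 1 n ≠ sideDeriv a (-1) n := by
  have hk2 : 2 ≤ k := by
    rcases Nat.lt_or_ge k 2 with h | h
    · obtain rfl : k = 1 := by omega
      simp at hc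
    · exact h
  induction n, hkn using Nat.le_induction with
  | base => exact (sideDeriv_right_lt_left_succ_of_eq_zero ha hk2 hc).ne
  | succ n hkn ih =>
    by_cases hcn : critOrbit n a = 0
    · exact (sideDeriv_right_lt_left_succ_of_eq_zero ha (by omega) hcn).ne
    · have ha0 : a ≠ 0 := ((Real.sqrt_pos.mpr two_pos).trans_le ha.1).ne'
      rw [← sub_ne_zero, sideDeriv_right_sub_left_succ hcn]
      have hsign : Real.sign (critOrbit n a) ≠ 0 := fun h => hcn (Real.sign_eq_zero_iff.mp h)
      exact mul_ne_zero (neg_ne_zero.mpr (mul_ne_zero hsign ha0)) (sub_ne_zero.mpr ih)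

end Sides

section Parameter

variable {a : ℝ} (ha : a ∈ Icc (√2) 2)
include ha

lemma hasDerivWithinAt_Ici_critOrbit (n : ℕ) :
    HasDerivWithinAt (critOrbit n) (sideDeriv a 1 n) (Ici a) a :=
  hasDerivWithinAt_critOrbit ha (Or.inl rfl) (fun b hb => by simpa using hb) n

lemma hasDerivWithinAt_Iic_critOrbit (n : ℕ) :
    HasDerivWithinAt (critOrbit n) (sideDeriv a (-1) n) (Iic a) a :=
  hasDerivWithinAt_critOrbit ha (Or.inr rfl) (fun b hb => by simpa using hb) n

lemma hasDerivAt_critOrbit_of_forall_ne_zero {n : ℕ}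
    (h : ∀ k, 1 ≤ k → k < n → critOrbit k a ≠ 0) :
    HasDerivAt (critOrbit n) (sideDeriv a 1 n) a := by
  have hL := hasDerivWithinAt_Iic_critOrbit ha n
  rw [← sideDeriv_right_eq_left h] at hL
  simpa [Iic_union_Ici] using hL.union (hasDerivWithinAt_Ici_critOrbit ha n)

lemma not_differentiableAt_critOrbit {k n : ℕ} (hk : 1 ≤ k) (hc : critOrbit k a = 0)
    (hkn : k < n) : ¬ DifferentiableAt ℝ (critOrbit n) a := fun hd =>
  sideDeriv_right_ne_left ha hk hc hkn <|
    ((uniqueDiffOn_Ici a a self_mem_Ici).eq_deriv _ (hasDerivWithinAt_Ici_critOrbit ha n)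
      hd.hasDerivAt.hasDerivWithinAt).trans
    ((uniqueDiffOn_Iic a a self_mem_Iic).eq_deriv _ (hasDerivWithinAt_Iic_critOrbit ha n)
      hd.hasDerivAt.hasDerivWithinAt).symm

end Parameter

lemma prod_neg_mul_sign_critOrbit {a : ℝ} {n : ℕ} (h : ∀ k, 1 ≤ k → k < n → critOrbit k a ≠ 0) :
    ∏ k ∈ Finset.Ico 1 n, (-a * Real.sign (critOrbit k a)) = a ^ (n - 1) * itineraryProd a 1 n := by
  rw [itineraryProd, ← Nat.card_Ico 1 n, ← Finset.prod_const, ← Finset.prod_mul_distrib]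
  refine Finset.prod_congr rfl fun k hk => ?_
  rw [Finset.mem_Ico] at hk
  rw [itinerary_of_ne_zero (h k hk.1 hk.2)]
  ring

end TentMap

open TentMap in
theorem stmt7_general (n : ℕ) (hn : 2 ≤ n) (J : Set ℝ) (hJ : J ⊆ Set.Icc (Real.sqrt 2) 2) :
    ∀ a ∈ J, Real.sign (deriv (fun b => (tent b)^[n] 0) a)
      = Real.sign (∏ k ∈ Finset.Ico 1 n, (-a * Real.sign ((tent a)^[k] 0))) := by
  intro a haJ
  have ha := hJ haJ
  change Real.sign (deriv (critOrbit n) a)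
    = Real.sign (∏ k ∈ Finset.Ico 1 n, (-a * Real.sign (critOrbit k a)))
  by_cases h : ∀ k, 1 ≤ k → k < n → critOrbit k a ≠ 0
  · have hpow : 0 < a ^ (n - 1) := pow_pos ((Real.sqrt_pos.mpr two_pos).trans_le ha.1) _
    rw [(hasDerivAt_critOrbit_of_forall_ne_zero ha h).deriv, prod_neg_mul_sign_critOrbit h,
      mul_comm, sign_mul_of_eq_one_or (itineraryProd_eq_one_or (Or.inl rfl) n) hpow,
      sign_sideDeriv ha (Or.inl rfl) hn]
  · push Not at h
    obtain ⟨k, hk, hkn, hc⟩ := h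
    rw [deriv_zero_of_not_differentiableAt (not_differentiableAt_critOrbit ha hk hc hkn),
      Finset.prod_eq_zero (Finset.mem_Ico.mpr ⟨hk, hkn⟩) (by simp [hc])]

theorem stmt7 (n : ℕ) (hn : 2 ≤ n) (J : Set ℝ) (hJ : J ⊆ Set.Icc (Real.sqrt 2) 2)
    (hJconn : J.OrdConnected)
    (hk : ∀ a ∈ interior J, ∀ k, 1 ≤ k → k < n → (tent a)^[k] 0 ≠ 0) :
    ∀ a ∈ J, Real.sign (deriv (fun b => (tent b)^[n] 0) a)
      = Real.sign (∏ k ∈ Finset.Ico 1 n, (-a * Real.sign ((tent a)^[k] 0))) :=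
  stmt7_general n hn J hJ
end

section
/- Suppose C₀ > 1, δ > 0, n ≥ 2, and g: [a₁, a₂] → ℝ is differentiable with δ·t^{n-1} ≤ |g'(t)| ≤ C₀·t^{n-1}·a₂ for all t ∈ [a₁,a₂] ⊂ [√2, 2], and |g(a₂) - g(a₁)| < 2. Then (a₂/a₁)^n ≤ 1 + 2n/(δ·a₁^n), and in particular (a₂/a₁)^n is bounded above by an absolute constant depending only on δ. -/
/-!
With `φ t = δ / n * t ^ n` we have `φ' ≤ |g'|` on `[a₁, a₂]`, and `g'` never vanishes there, so
`φ a₂ - φ a₁ ≤ |g a₂ - g a₁| < 2`, i.e. `a₂ ^ n - a₁ ^ n ≤ 2 n / δ`. Dividing by `a₁ ^ n` gives the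
first bound; the second follows from `n ≤ 2 * √2 ^ n ≤ 2 * a₁ ^ n`.
-/

open Set

/- By Darboux's theorem `g'` has constant sign `s = ±1` on `[a, b]`, so `s • g - f` has
nonnegative derivative `|g'| - f'` there. -/
theorem sub_le_abs_sub_of_deriv_le_abs_deriv {a b : ℝ} (hab : a ≤ b) {f g f' g' : ℝ → ℝ}
    (hf : ∀ t ∈ Icc a b, HasDerivAt f (f' t) t) (hg : ∀ t ∈ Icc a b, HasDerivAt g (g' t) t)
    (hg' : ∀ t ∈ Icc a b, g' t ≠ 0) (hle : ∀ t ∈ Icc a b, f' t ≤ |g' t|) :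
    f b - f a ≤ |g b - g a| := by
  obtain ⟨s, hs, habs⟩ : ∃ s : ℝ, |s| = 1 ∧ ∀ t ∈ Icc a b, |g' t| = s * g' t := by
    rcases hasDerivWithinAt_forall_lt_or_forall_gt_of_forall_ne (convex_Icc a b)
      (fun t ht => (hg t ht).hasDerivWithinAt) hg' with hneg | hpos
    · exact ⟨-1, by simp, fun t ht => by rw [abs_of_neg (hneg t ht)]; ring⟩
    · exact ⟨1, by simp, fun t ht => by rw [abs_of_pos (hpos t ht)]; ring⟩
  have hderiv : ∀ t ∈ Icc a b, HasDerivAt (fun x => s * g x - f x) (s * g' t - f' t) t :=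
    fun t ht => ((hg t ht).const_mul s).sub (hf t ht)
  have hmono : MonotoneOn (fun x => s * g x - f x) (Icc a b) :=
    monotoneOn_of_hasDerivWithinAt_nonneg (convex_Icc a b)
      (fun t ht => (hderiv t ht).continuousAt.continuousWithinAt)
      (fun t ht => (hderiv t (interior_subset ht)).hasDerivWithinAt)
      (fun t ht => by
        have := hle t (interior_subset ht)
        rw [habs t (interior_subset ht)] at this
        linarith)
  have hab' := hmono (left_mem_Icc.mpr hab) (right_mem_Icc.mpr hab) hab
  have hs_le : s * (g b - g a) ≤ |g b - g a| := by
    simpa [abs_mul, hs] using le_abs_self (s * (g b - g a))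
  simp only at hab'
  linarith

theorem div_pow_le_one_add_of_pow_sub_pow_le {a₁ a₂ c : ℝ} (ha₁ : 0 < a₁) (n : ℕ)
    (h : a₂ ^ n - a₁ ^ n ≤ c) : (a₂ / a₁) ^ n ≤ 1 + c / a₁ ^ n := by
  have hpow : 0 < a₁ ^ n := pow_pos ha₁ n
  rw [div_pow, div_le_iff₀ hpow, add_mul, div_mul_cancel₀ c hpow.ne']
  linarith

theorem natCast_le_two_mul_sqrt_two_pow (n : ℕ) : (n : ℝ) ≤ 2 * √2 ^ n := by
  have hs : (1 : ℝ) ≤ √2 := Real.one_le_sqrt.mpr (by norm_num)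
  induction n using Nat.twoStepInduction with
  | zero => norm_num
  | one => push_cast; linarith
  | more n ih _ =>
    have hsq : √2 ^ (n + 2) = 2 * √2 ^ n := by
      rw [pow_add, Real.sq_sqrt zero_le_two, mul_comm]
    have : (1 : ℝ) ≤ √2 ^ n := one_le_pow₀ hs
    push_cast
    rw [hsq]
    linarith

theorem stmt9_general (δ : ℝ) (hδ : 0 < δ) (n : ℕ) (hn : 2 ≤ n)
    (a₁ a₂ : ℝ) (h1 : Real.sqrt 2 ≤ a₁) (h12 : a₁ ≤ a₂)
    (g g' : ℝ → ℝ)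
    (hderiv : ∀ t ∈ Set.Icc a₁ a₂, HasDerivAt g (g' t) t)
    (hlow : ∀ t ∈ Set.Icc a₁ a₂, δ * t ^ (n - 1) ≤ |g' t|)
    (hbd : |g a₂ - g a₁| < 2) :
    (a₂ / a₁) ^ n ≤ 1 + 2 * n / (δ * a₁ ^ n) ∧ (a₂ / a₁) ^ n ≤ 1 + 4 / δ := by
  have ha₁ : 0 < a₁ := (Real.sqrt_pos.mpr two_pos).trans_le h1
  have hn₀ : (0 : ℝ) < n := Nat.cast_pos.mpr (by omega)
  have hpow_deriv (t : ℝ) : HasDerivAt (fun x => δ / n * x ^ n) (δ * t ^ (n - 1)) t :=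
    ((hasDerivAt_pow n t).const_mul (δ / n)).congr_deriv (by field_simp)
  have hg'_ne (t : ℝ) (ht : t ∈ Icc a₁ a₂) : g' t ≠ 0 := by
    have : 0 < δ * t ^ (n - 1) := mul_pos hδ (pow_pos (ha₁.trans_le ht.1) _)
    exact abs_pos.mp (this.trans_le (hlow t ht))
  have hgrowth := sub_le_abs_sub_of_deriv_le_abs_deriv h12 (fun t _ => hpow_deriv t)
    hderiv hg'_ne hlow
  have hdiff : a₂ ^ n - a₁ ^ n ≤ 2 * n / δ := by
    rw [le_div_iff₀ hδ]
    have : δ / n * a₂ ^ n - δ / n * a₁ ^ n = δ * (a₂ ^ n - a₁ ^ n) / n := by ring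
    rw [this, div_le_iff₀ hn₀] at hgrowth
    nlinarith [mul_lt_mul_of_pos_right hbd hn₀]
  have hratio : (a₂ / a₁) ^ n ≤ 1 + 2 * n / (δ * a₁ ^ n) := by
    rw [← div_div]
    exact div_pow_le_one_add_of_pow_sub_pow_le ha₁ n hdiff
  refine ⟨hratio, hratio.trans ?_⟩
  have hn_le : (n : ℝ) ≤ 2 * a₁ ^ n := (natCast_le_two_mul_sqrt_two_pow n).trans
    (by gcongr)
  have : 2 * (n : ℝ) / (δ * a₁ ^ n) ≤ 4 / δ := by
    rw [div_le_div_iff₀ (by positivity) hδ]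
    nlinarith
  linarith

theorem stmt9 (C₀ δ : ℝ) (hC₀ : 1 < C₀) (hδ : 0 < δ) (n : ℕ) (hn : 2 ≤ n)
    (a₁ a₂ : ℝ) (h1 : Real.sqrt 2 ≤ a₁) (h12 : a₁ ≤ a₂) (h2 : a₂ ≤ 2)
    (g g' : ℝ → ℝ)
    (hderiv : ∀ t ∈ Set.Icc a₁ a₂, HasDerivAt g (g' t) t)
    (hlow : ∀ t ∈ Set.Icc a₁ a₂, δ * t ^ (n - 1) ≤ |g' t|)
    (hup : ∀ t ∈ Set.Icc a₁ a₂, |g' t| ≤ C₀ * t ^ (n - 1) * a₂)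
    (hbd : |g a₂ - g a₁| < 2) :
    (a₂ / a₁) ^ n ≤ 1 + 2 * n / (δ * a₁ ^ n) ∧ (a₂ / a₁) ^ n ≤ 1 + 4 / δ :=
  stmt9_general δ hδ n hn a₁ a₂ h1 h12 g g' hderiv hlow hbd
end

section
/- Let f_a(x) = 1 - a|x| be the tent map with a ∈ [𝕒_r, 2] for some r ≥ 2, where 𝕒_r is the unique parameter in (√2,2) with c_k(𝕒_r) < 0 for 2 ≤ k ≤ r and c_{r+1}(𝕒_r) = 𝕒_r - 1. If x ∈ (a-1, 1], then f_a^k(x) < a - 1 for all 1 ≤ k < r. -/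
lemma tent_iterate_two_zero (t : ℝ) : (tent t)^[2] 0 = 1 - t := by
  simp [tent]

lemma tent_lt_tent {s t y z : ℝ} (ht : 0 < t) (hst : s ≤ t) (hzy : |z| < |y|) :
    tent t y < tent s z := by
  unfold tent
  nlinarith [abs_nonneg z]

lemma tent_iterate_lt_tent_iterate {s t y z : ℝ} (ht : 0 < t) (hst : s ≤ t) (hyz : y < z)
    (n : ℕ) (hneg : ∀ j < n, (tent s)^[j] z ≤ 0) : (tent t)^[n] y < (tent s)^[n] z := by
  induction n with
  | zero => exact hyz
  | succ n ih =>
    have hlt := ih fun j hj => hneg j (by omega)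
    have hnonpos := hneg n (by omega)
    rw [Function.iterate_succ_apply', Function.iterate_succ_apply']
    exact tent_lt_tent ht hst (by rw [abs_of_nonpos hnonpos, abs_of_neg (by linarith)]; linarith)

theorem stmt11_general (r : ℕ) (hr : 2 ≤ r) (b : ℝ)
    (hbneg : ∀ k, 2 ≤ k → k ≤ r → (tent b)^[k] 0 < 0)
    (hbhit : (tent b)^[r + 1] 0 = b - 1)
    (a : ℝ) (hab : b ≤ a)
    (x : ℝ) (hx1 : a - 1 < x) :
    ∀ k, 1 ≤ k → k < r → (tent a)^[k] x < a - 1 := by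
  intro k hk hkr
  obtain ⟨m, rfl⟩ : ∃ m, k = m + 1 := ⟨k - 1, by omega⟩
  have hb : 1 < b := by linarith [tent_iterate_two_zero b ▸ hbneg 2 le_rfl hr]
  have hstart : tent a x < (tent b)^[3] 0 := by
    rw [show 3 = 1 + 2 from rfl, Function.iterate_add_apply, tent_iterate_two_zero,
      Function.iterate_one]
    exact tent_lt_tent (by linarith) hab
      (by rw [abs_of_neg (by linarith), abs_of_pos (by linarith)]; linarith)
  have horbit : ∀ j < m, (tent b)^[j] ((tent b)^[3] 0) ≤ 0 := fun j hj => by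
    rw [← Function.iterate_add_apply]
    exact (hbneg (j + 3) (by omega) (by omega)).le
  have hend : (tent b)^[m + 3] 0 ≤ b - 1 := by
    rcases Nat.lt_or_eq_of_le (show m + 3 ≤ r + 1 by omega) with hlt | heq
    · linarith [hbneg (m + 3) (by omega) (by omega)]
    · rw [heq, hbhit]
  calc (tent a)^[m + 1] x = (tent a)^[m] (tent a x) := Function.iterate_succ_apply _ _ _
    _ < (tent b)^[m] ((tent b)^[3] 0) :=
        tent_iterate_lt_tent_iterate (by linarith) hab hstart m horbit
    _ = (tent b)^[m + 3] 0 := (Function.iterate_add_apply _ _ _ _).symm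
    _ ≤ a - 1 := by linarith

theorem stmt11 (r : ℕ) (hr : 2 ≤ r) (b : ℝ) (hb : b ∈ Set.Ioo (Real.sqrt 2) 2)
    (hbneg : ∀ k, 2 ≤ k → k ≤ r → (tent b)^[k] 0 < 0)
    (hbhit : (tent b)^[r + 1] 0 = b - 1)
    (a : ℝ) (hab : b ≤ a) (ha2 : a ≤ 2)
    (x : ℝ) (hx1 : a - 1 < x) (hx2 : x ≤ 1) :
    ∀ k, 1 ≤ k → k < r → (tent a)^[k] x < a - 1 :=
  stmt11_general r hr b hbneg hbhit a hab x hx1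
end

section
/- Let μ be a Borel probability measure on I_a = [1-a, 1] that is conformal for the tent map f_a(x) = 1 - a|x| with respect to the Jacobian j_a (where j_a = 2 on [1-a, a-1]\{0} and j_a = 1 elsewhere), i.e., μ(f_a E) = ∫_E j_a dμ whenever f_a is injective on the Borel set E. If a ∈ [𝕒_r, 2] (so that every point of (a-1,1] has its next r-1 iterates in [1-a, a-1)) and J ⊂ I_a is an interval on which f_a^r is injective, then μ(f_a^r J) ≥ 2^{r-1} μ(J). -/
/-!
Write `f = tent a`, `I = [1-a, 1]` and `Z = [1-a, a-1]`. Conformality gives `μ (f E) ≥ μ E` for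
injectivity sets `E ⊆ I`, and `μ (f E) ≥ 2 μ E` for `E ⊆ Z` once `μ {0} = 0`. By the window
hypothesis an orbit segment of length `r` leaves `Z` at most once, so by induction on `n ≤ r`,
`2 ^ n μ E ≤ 2 μ (f^n E)`: the part `E ∩ Z` doubles at once and falls under the induction
hypothesis, while `E \ Z` does not shrink at the first step and doubles at each of the next
`n - 1`. Finally `0` is not an atom: every orbit meets `Z \ {0}` within four steps, so the mass of
an atom would double every four steps.
-/

open MeasureTheory Set Function
open scoped ENNReal

def IsConformal {X : Type*} [MeasurableSpace X] (μ : Measure X) (f : X → X) (I : Set X)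
    (j : X → ℝ≥0∞) : Prop :=
  ∀ E : Set X, MeasurableSet E → E ⊆ I → InjOn f E → μ (f '' E) = ∫⁻ x in E, j x ∂μ

namespace IsConformal

variable {X : Type*} [MeasurableSpace X] {μ : Measure X} {f : X → X} {I : Set X}
  {j : X → ℝ≥0∞}

theorem mul_measure_le_measure_image (h : IsConformal μ f I j) {Z : Set X} (hZI : Z ⊆ I)
    {c : ℝ≥0∞} (hj : ∀ᵐ x ∂μ, x ∈ Z → c ≤ j x) {E : Set X} (hE : MeasurableSet E)
    (hEZ : E ⊆ Z) (hinj : InjOn f E) : c * μ E ≤ μ (f '' E) := by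
  rw [h E hE (hEZ.trans hZI) hinj, ← setLIntegral_const]
  exact setLIntegral_mono_ae' hE (hj.mono fun x hx hxE => hx (hEZ hxE))

variable [MeasurableSingletonClass X]

theorem measure_singleton_image (h : IsConformal μ f I j) {x : X} (hx : x ∈ I) :
    μ {f x} = j x * μ {x} := by
  rw [← image_singleton, h {x} (measurableSet_singleton x) (singleton_subset_iff.2 hx)
    (injOn_singleton f x), lintegral_singleton]

section Atoms

variable (h : IsConformal μ f I j) (hI : MapsTo f I I) (hj : ∀ x ∈ I, 1 ≤ j x)
include h hI hj

theorem measure_singleton_le_iterate {x : X} (hx : x ∈ I) (n : ℕ) :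
    μ {x} ≤ μ {f^[n] x} := by
  induction n with
  | zero => rfl
  | succ n ih =>
    rw [iterate_succ_apply', h.measure_singleton_image (hI.iterate n hx)]
    exact ih.trans (le_mul_of_one_le_left' (hj _ (hI.iterate n hx)))

theorem two_mul_measure_singleton_le_iterate {N : ℕ}
    (hvisit : ∀ x ∈ I, ∃ m < N, 2 ≤ j (f^[m] x)) {x : X} (hx : x ∈ I) :
    2 * μ {x} ≤ μ {f^[N] x} := by
  obtain ⟨m, hmN, hm⟩ := hvisit x hx
  have hmI : f^[m] x ∈ I := hI.iterate m hx
  calc 2 * μ {x} ≤ j (f^[m] x) * μ {f^[m] x} :=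
        mul_le_mul' hm (h.measure_singleton_le_iterate hI hj hx m)
    _ = μ {f^[m + 1] x} := by rw [iterate_succ_apply', h.measure_singleton_image hmI]
    _ ≤ μ {f^[N - (m + 1)] (f^[m + 1] x)} :=
        h.measure_singleton_le_iterate hI hj (hI.iterate _ hx) _
    _ = μ {f^[N] x} := by rw [← iterate_add_apply, Nat.sub_add_cancel hmN]

theorem measure_singleton_eq_zero [IsFiniteMeasure μ] {N : ℕ}
    (hvisit : ∀ x ∈ I, ∃ m < N, 2 ≤ j (f^[m] x)) {x : X} (hx : x ∈ I) : μ {x} = 0 := by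
  have hgrowth : ∀ k : ℕ, 2 ^ k * μ {x} ≤ μ {f^[N * k] x} := by
    intro k
    induction k with
    | zero => simp
    | succ k ih =>
      calc 2 ^ (k + 1) * μ {x} = 2 * (2 ^ k * μ {x}) := by ring
        _ ≤ 2 * μ {f^[N * k] x} := by gcongr
        _ ≤ μ {f^[N] (f^[N * k] x)} :=
            h.two_mul_measure_singleton_le_iterate hI hj hvisit (hI.iterate _ hx)
        _ = μ {f^[N * (k + 1)] x} := by rw [← iterate_add_apply, mul_add_one, add_comm]
  by_contra hx0
  obtain ⟨k, hk⟩ := ENNReal.exists_nat_mul_gt hx0 (measure_ne_top μ univ)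
  have : (k : ℝ≥0∞) ≤ 2 ^ k := by exact_mod_cast Nat.lt_two_pow_self.le
  exact (hk.trans_le ((mul_le_mul_left this _).trans (hgrowth k))).not_ge
    (measure_mono (subset_univ _))

end Atoms

end IsConformal

section Expanding

variable {X : Type*} [TopologicalSpace X] [PolishSpace X] [MeasurableSpace X] [BorelSpace X]
  {f : X → X} {μ : Measure X} {c : ℝ≥0∞}

theorem measure_image_inter_add_measure_image_sdiff {Y : Type*} [TopologicalSpace Y] [T2Space Y]
    [MeasurableSpace Y] [OpensMeasurableSpace Y] {g : X → Y} (hg : Continuous g)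
    {E Z : Set X} (hE : MeasurableSet E) (hZ : MeasurableSet Z) (hinj : InjOn g E)
    (ν : Measure Y) : ν (g '' (E ∩ Z)) + ν (g '' (E \ Z)) = ν (g '' E) := by
  have hm : MeasurableSet (g '' (E ∩ Z)) :=
    (hE.inter hZ).image_of_continuousOn_injOn hg.continuousOn (hinj.mono inter_subset_left)
  rw [hinj.image_sdiff, measure_add_sdiff hm.nullMeasurableSet,
    union_eq_right.2 (image_mono inter_subset_left)]

theorem pow_mul_measure_le_measure_image_iterate (hf : Continuous f) {Z : Set X}
    (hZ : ∀ E, MeasurableSet E → E ⊆ Z → InjOn f E → c * μ E ≤ μ (f '' E)) (n : ℕ) :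
    ∀ E, MeasurableSet E → InjOn f^[n] E → (∀ x ∈ E, ∀ k < n, f^[k] x ∈ Z) →
      c ^ n * μ E ≤ μ (f^[n] '' E) := by
  induction n with
  | zero => simp
  | succ n ih =>
    intro E hE hinj hvisit
    rw [iterate_succ] at hinj ⊢
    rw [image_comp]
    have hfE : MeasurableSet (f '' E) :=
      hE.image_of_continuousOn_injOn hf.continuousOn hinj.of_comp
    have hvisit' : ∀ y ∈ f '' E, ∀ k < n, f^[k] y ∈ Z := by
      rintro _ ⟨x, hx, rfl⟩ k hk
      rw [← iterate_succ_apply]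
      exact hvisit x hx (k + 1) (by omega)
    calc c ^ (n + 1) * μ E = c ^ n * (c * μ E) := by ring
      _ ≤ c ^ n * μ (f '' E) := by
          gcongr
          exact hZ E hE (fun x hx => hvisit x hx 0 n.succ_pos) hinj.of_comp
      _ ≤ μ (f^[n] '' (f '' E)) := ih _ hfE hinj.image_of_comp hvisit'

variable (hf : Continuous f) {I Z : Set X} (hZm : MeasurableSet Z) (hI : MapsTo f I I)
  (hc : 1 ≤ c) (hexp : ∀ E, MeasurableSet E → E ⊆ I → InjOn f E → μ E ≤ μ (f '' E))
  (hZ : ∀ E, MeasurableSet E → E ⊆ Z → InjOn f E → c * μ E ≤ μ (f '' E))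
  {r : ℕ} (hret : ∀ x ∈ I \ Z, ∀ k, 1 ≤ k → k < r → f^[k] x ∈ Z)
include hf hZm hI hc hexp hZ hret

theorem pow_mul_measure_le_mul_measure_image_iterate {n : ℕ} (hn : n ≤ r) :
    ∀ E, MeasurableSet E → E ⊆ I → InjOn f^[n] E → c ^ n * μ E ≤ c * μ (f^[n] '' E) := by
  induction n with
  | zero => simpa using fun E _ _ => le_mul_of_one_le_left' hc
  | succ n ih =>
    intro E hE hEI hinj
    have hinj' : InjOn (f^[n] ∘ f) E := by rwa [← iterate_succ]
    have himage : ∀ F ⊆ E, MeasurableSet F →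
        MeasurableSet (f '' F) ∧ InjOn f F ∧ InjOn f^[n] (f '' F) := fun F hFE hF =>
      ⟨hF.image_of_continuousOn_injOn hf.continuousOn (hinj'.mono hFE).of_comp,
        (hinj'.mono hFE).of_comp, (hinj'.mono hFE).image_of_comp⟩
    obtain ⟨hAm, hAinj, hAinj'⟩ := himage _ inter_subset_left (hE.inter hZm)
    obtain ⟨hBm, hBinj, hBinj'⟩ := himage _ sdiff_subset (hE.diff hZm)
    have hA : c ^ (n + 1) * μ (E ∩ Z) ≤ c * μ (f^[n] '' (f '' (E ∩ Z))) :=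
      calc c ^ (n + 1) * μ (E ∩ Z) = c ^ n * (c * μ (E ∩ Z)) := by ring
        _ ≤ c ^ n * μ (f '' (E ∩ Z)) := by
            gcongr
            exact hZ _ (hE.inter hZm) inter_subset_right hAinj
        _ ≤ c * μ (f^[n] '' (f '' (E ∩ Z))) :=
            ih (by omega) _ hAm ((image_mono (inter_subset_left.trans hEI)).trans
              hI.image_subset) hAinj'
    have hB : c ^ (n + 1) * μ (E \ Z) ≤ c * μ (f^[n] '' (f '' (E \ Z))) := by
      have hvisit : ∀ y ∈ f '' (E \ Z), ∀ k < n, f^[k] y ∈ Z := by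
        rintro _ ⟨x, ⟨hxE, hxZ⟩, rfl⟩ k hk
        rw [← iterate_succ_apply]
        exact hret x ⟨hEI hxE, hxZ⟩ (k + 1) (by omega) (by omega)
      calc c ^ (n + 1) * μ (E \ Z) = c * (c ^ n * μ (E \ Z)) := by ring
        _ ≤ c * (c ^ n * μ (f '' (E \ Z))) := by
            gcongr c * (c ^ n * ?_)
            exact hexp _ (hE.diff hZm) (sdiff_subset.trans hEI) hBinj
        _ ≤ c * μ (f^[n] '' (f '' (E \ Z))) := by
            gcongr
            exact pow_mul_measure_le_measure_image_iterate hf hZ n _ hBm hBinj' hvisit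
    rw [← measure_inter_add_sdiff E hZm,
      ← measure_image_inter_add_measure_image_sdiff (hf.iterate (n + 1)) hE hZm hinj,
      iterate_succ, image_comp, image_comp, mul_add, mul_add]
    exact add_le_add hA hB

theorem pow_pred_mul_measure_le_measure_image_iterate (hc' : c ≠ ∞) (hr : 1 ≤ r) {J : Set X}
    (hJ : MeasurableSet J) (hJI : J ⊆ I) (hinj : InjOn f^[r] J) :
    c ^ (r - 1) * μ J ≤ μ (f^[r] '' J) := by
  have key := pow_mul_measure_le_mul_measure_image_iterate hf hZm hI hc hexp hZ hret le_rfl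
    J hJ hJI hinj
  obtain ⟨n, rfl⟩ : ∃ n, r = n + 1 := ⟨r - 1, by omega⟩
  rw [pow_succ', mul_assoc] at key
  simpa using (ENNReal.mul_le_mul_iff_right (zero_lt_one.trans_le hc).ne' hc').1 key

end Expanding

noncomputable def tentJacobian (a x : ℝ) : ℝ≥0∞ :=
  if x ∈ Icc (1 - a) (a - 1) ∧ x ≠ 0 then 2 else 1

theorem one_le_tentJacobian (a x : ℝ) : 1 ≤ tentJacobian a x := by
  unfold tentJacobian
  split_ifs <;> norm_num

theorem tentJacobian_eq_two {a x : ℝ} (hx : x ∈ Icc (1 - a) (a - 1)) (hx0 : x ≠ 0) :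
    tentJacobian a x = 2 :=
  if_pos ⟨hx, hx0⟩

theorem continuous_tent (a : ℝ) : Continuous (tent a) :=
  continuous_const.sub (continuous_const.mul continuous_abs)

theorem mapsTo_tent {a : ℝ} (ha0 : 0 ≤ a) (ha2 : a ≤ 2) :
    MapsTo (tent a) (Icc (1 - a) 1) (Icc (1 - a) 1) := by
  rintro x ⟨hx1, hx2⟩
  have : |x| ≤ 1 := abs_le.2 ⟨by linarith, hx2⟩
  constructor <;> simp only [tent] <;> nlinarith [abs_nonneg x]

theorem iterate_tent_two_zero (a : ℝ) : (tent a)^[2] 0 = 1 - a := by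
  simp [tent]

theorem exists_iterate_tent_mem_Icc_ne_zero {a : ℝ} (ha1 : 1 < a) (ha2 : a ≤ 2)
    (hret : ∀ x, a - 1 < x → x ≤ 1 → tent a x < a - 1) {x : ℝ} (hx : x ∈ Icc (1 - a) 1) :
    ∃ m < 4, (tent a)^[m] x ∈ Icc (1 - a) (a - 1) ∧ (tent a)^[m] x ≠ 0 := by
  have hzero : (tent a)^[2] 0 ∈ Icc (1 - a) (a - 1) ∧ (tent a)^[2] 0 ≠ 0 := by
    rw [iterate_tent_two_zero]
    exact ⟨⟨le_rfl, by linarith⟩, by linarith⟩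
  rcases le_or_gt x (a - 1) with hxZ | hxZ
  · rcases eq_or_ne x 0 with rfl | hx0
    · exact ⟨2, by norm_num, hzero⟩
    · exact ⟨0, by norm_num, ⟨hx.1, hxZ⟩, hx0⟩
  · have hy : tent a x ∈ Icc (1 - a) (a - 1) :=
      ⟨(mapsTo_tent (by linarith) ha2 hx).1, (hret x hxZ hx.2).le⟩
    rcases eq_or_ne (tent a x) 0 with hy0 | hy0
    · refine ⟨3, by norm_num, ?_⟩
      rwa [iterate_succ_apply, hy0]
    · exact ⟨1, by norm_num, hy, hy0⟩

section TentConformal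

variable {a : ℝ} {μ : Measure ℝ}
  (hμ : IsConformal μ (tent a) (Icc (1 - a) 1) (tentJacobian a))
include hμ

theorem measure_le_measure_image_tent {E : Set ℝ} (hE : MeasurableSet E)
    (hEI : E ⊆ Icc (1 - a) 1) (hinj : InjOn (tent a) E) : μ E ≤ μ (tent a '' E) := by
  simpa using hμ.mul_measure_le_measure_image subset_rfl
    (ae_of_all _ fun x _ => one_le_tentJacobian a x) hE hEI hinj

theorem measure_singleton_zero_eq_zero_of_tent [IsFiniteMeasure μ] (ha1 : 1 < a) (ha2 : a ≤ 2)
    (hret : ∀ x, a - 1 < x → x ≤ 1 → tent a x < a - 1) : μ {0} = 0 := by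
  refine hμ.measure_singleton_eq_zero (mapsTo_tent (by linarith) ha2)
    (fun x _ => one_le_tentJacobian a x) (N := 4) (fun x hx => ?_) ⟨by linarith, zero_le_one⟩
  obtain ⟨m, hm, hmZ, hm0⟩ := exists_iterate_tent_mem_Icc_ne_zero ha1 ha2 hret hx
  exact ⟨m, hm, (tentJacobian_eq_two hmZ hm0).ge⟩

theorem two_mul_measure_le_measure_image_tent (ha2 : a ≤ 2) (hatom : μ {0} = 0) {E : Set ℝ}
    (hE : MeasurableSet E) (hEZ : E ⊆ Icc (1 - a) (a - 1)) (hinj : InjOn (tent a) E) :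
    2 * μ E ≤ μ (tent a '' E) :=
  hμ.mul_measure_le_measure_image (Icc_subset_Icc_right (by linarith))
    (by filter_upwards [compl_mem_ae_iff.2 hatom] with x hx0 hxZ
        using (tentJacobian_eq_two hxZ hx0).ge) hE hEZ hinj

end TentConformal

theorem stmt12_general (a : ℝ) (ha : a ∈ Set.Icc (Real.sqrt 2) 2) (r : ℕ) (hr : 2 ≤ r)
    (μ : MeasureTheory.Measure ℝ) [MeasureTheory.IsProbabilityMeasure μ]
    (hconf : ∀ E : Set ℝ, MeasurableSet E → E ⊆ Set.Icc (1 - a) 1 →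
      Set.InjOn (tent a) E →
      μ (tent a '' E) = ∫⁻ x in E,
        (if x ∈ Set.Icc (1 - a) (a - 1) ∧ x ≠ 0 then (2 : ENNReal) else 1) ∂μ)
    (hwin : ∀ x : ℝ, a - 1 < x → x ≤ 1 → ∀ k, 1 ≤ k → k < r → (tent a)^[k] x < a - 1)
    (J : Set ℝ) (hJ : J ⊆ Set.Icc (1 - a) 1) (hJm : MeasurableSet J)
    (hinj : Set.InjOn ((tent a)^[r]) J) :
    2 ^ (r - 1) * μ J ≤ μ ((tent a)^[r] '' J) := by
  have ha1 : 1 < a := Real.one_lt_sqrt_two.trans_le ha.1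
  have hI := mapsTo_tent (by linarith) ha.2
  have hμ : IsConformal μ (tent a) (Icc (1 - a) 1) (tentJacobian a) := hconf
  have hatom : μ {0} = 0 := measure_singleton_zero_eq_zero_of_tent hμ ha1 ha.2
    fun x hx1 hx2 => by simpa using hwin x hx1 hx2 1 le_rfl hr
  refine pow_pred_mul_measure_le_measure_image_iterate (continuous_tent a) measurableSet_Icc hI
    one_le_two (fun _ => measure_le_measure_image_tent hμ)
    (fun _ => two_mul_measure_le_measure_image_tent hμ ha.2 hatom) ?_ ENNReal.ofNat_ne_top
    (by omega) hJm hJ hinj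
  rintro x ⟨hxI, hxZ⟩ k hk hkr
  exact ⟨(hI.iterate k hxI).1, (hwin x (not_le.1 fun h => hxZ ⟨hxI.1, h⟩) hxI.2 k hk hkr).le⟩

theorem stmt12 (a : ℝ) (ha : a ∈ Set.Icc (Real.sqrt 2) 2) (r : ℕ) (hr : 2 ≤ r)
    (μ : MeasureTheory.Measure ℝ) [MeasureTheory.IsProbabilityMeasure μ]
    (hconf : ∀ E : Set ℝ, MeasurableSet E → E ⊆ Set.Icc (1 - a) 1 →
      Set.InjOn (tent a) E →
      μ (tent a '' E) = ∫⁻ x in E,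
        (if x ∈ Set.Icc (1 - a) (a - 1) ∧ x ≠ 0 then (2 : ENNReal) else 1) ∂μ)
    (hwin : ∀ x : ℝ, a - 1 < x → x ≤ 1 → ∀ k, 1 ≤ k → k < r → (tent a)^[k] x < a - 1)
    (J : Set ℝ) (hJ : J ⊆ Set.Icc (1 - a) 1) (hJm : MeasurableSet J)
    (hJc : J.OrdConnected) (hinj : Set.InjOn ((tent a)^[r]) J) :
    2 ^ (r - 1) * μ J ≤ μ ((tent a)^[r] '' J) :=
  stmt12_general a ha r hr μ hconf hwin J hJ hJm hinj
end

section
/- Let ξ: [c₂, c₁] → ℝ satisfy |ξ| ≤ 1, and suppose ξ = -1 exactly on (ĉ₂, c₁] where the map f sends (ĉ₂, c₁] into [c₂, ĉ₂). Then for the products ξ|₁ⁿ(c) := ∏_{k=1}^{n-1} ξ(f^k c): whenever two consecutive factors include one with |value| = 1, the next has |value| = 1/2; consequently |ξ|₁^{2n+1}(c)| ≤ 2^{-n} for all n ≥ 1, and the series ∑_{n=1}^∞ ξ|₁ⁿ(c) converges absolutely. -/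
/-! The point `ĉ₂` splits the interval into a part where `|ξ| ≤ 1/2` and the part `(ĉ₂, c₁]`,
which `f` maps back into the first. So along an orbit, of any two consecutive factors at least one
has absolute value at most `1/2`; grouping the factors of `ξ|₁ⁿ(c)` in pairs bounds it by a
geometric sequence of ratio `1/2` in `⌊n/2⌋`. -/

open Finset Set

section PairedProducts

variable {a : ℕ → ℝ} {r : ℝ}

theorem abs_prod_Icc_two_mul_le_pow (hpair : ∀ m, |a (2 * m + 1) * a (2 * m + 2)| ≤ r) (n : ℕ) :
    |∏ k ∈ Finset.Icc 1 (2 * n), a k| ≤ r ^ n := by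
  induction n with
  | zero => simp
  | succ n ih =>
    have hr : 0 ≤ r := (abs_nonneg _).trans (hpair 0)
    rw [show 2 * (n + 1) = 2 * n + 1 + 1 by ring, prod_Icc_succ_top (by omega),
      prod_Icc_succ_top (by omega), mul_assoc, abs_mul, pow_succ]
    exact mul_le_mul ih (hpair n) (abs_nonneg _) (pow_nonneg hr n)

theorem abs_prod_Icc_two_mul_add_one_le_pow (hpair : ∀ m, |a (2 * m + 1) * a (2 * m + 2)| ≤ r)
    (hbd : ∀ k, |a k| ≤ 1) (n : ℕ) : |∏ k ∈ Finset.Icc 1 (2 * n + 1), a k| ≤ r ^ n := by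
  rw [prod_Icc_succ_top (by omega), abs_mul]
  simpa using mul_le_mul (abs_prod_Icc_two_mul_le_pow hpair n) (hbd _) (abs_nonneg _)
    (pow_nonneg ((abs_nonneg _).trans (hpair 0)) n)

theorem summable_abs_prod_Icc (hr : r < 1) (hpair : ∀ m, |a (2 * m + 1) * a (2 * m + 2)| ≤ r)
    (hbd : ∀ k, |a k| ≤ 1) : Summable fun n ↦ |∏ k ∈ Finset.Icc 1 n, a k| := by
  have hgeom : Summable (r ^ ·) :=
    summable_geometric_of_lt_one ((abs_nonneg _).trans (hpair 0)) hr
  exact Summable.even_add_odd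
    (hgeom.of_nonneg_of_le (fun _ ↦ abs_nonneg _) (abs_prod_Icc_two_mul_le_pow hpair))
    (hgeom.of_nonneg_of_le (fun _ ↦ abs_nonneg _) (abs_prod_Icc_two_mul_add_one_le_pow hpair hbd))

end PairedProducts

section Weights

variable {α : Type*} {f : α → α} {ξ : α → ℝ} {s t : Set α}

theorem abs_comp_le_half_of_abs_eq_one (hf : MapsTo f s s)
    (hhalf : ∀ x ∈ s, x ∉ t → |ξ x| ≤ 1 / 2) (hmap : MapsTo f t tᶜ) {x : α} (hx : x ∈ s)
    (hξx : |ξ x| = 1) : |ξ (f x)| ≤ 1 / 2 := by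
  have hxt : x ∈ t := by
    by_contra hxt
    linarith [hhalf x hx hxt]
  exact hhalf (f x) (hf hx) (hmap hxt)

theorem abs_mul_comp_le_half (hf : MapsTo f s s) (hbd : ∀ x ∈ s, |ξ x| ≤ 1)
    (hhalf : ∀ x ∈ s, x ∉ t → |ξ x| ≤ 1 / 2) (hmap : MapsTo f t tᶜ) {x : α} (hx : x ∈ s) :
    |ξ x * ξ (f x)| ≤ 1 / 2 := by
  rw [abs_mul]
  by_cases hxt : x ∈ t
  · simpa using mul_le_mul (hbd x hx) (hhalf (f x) (hf hx) (hmap hxt)) (abs_nonneg _) zero_le_one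
  · simpa using mul_le_mul (hhalf x hx hxt) (hbd (f x) (hf hx)) (abs_nonneg _) (by norm_num)

end Weights

theorem stmt15_general (c₂ c₁ cHat₂ c : ℝ)
    (hc : c ∈ Set.Icc c₂ c₁) (f ξ : ℝ → ℝ)
    (hf : Set.MapsTo f (Set.Icc c₂ c₁) (Set.Icc c₂ c₁))
    (hξbd : ∀ x ∈ Set.Icc c₂ c₁, |ξ x| ≤ 1)
    (hξhalf : ∀ x ∈ Set.Icc c₂ c₁, x ∉ Set.Ioc cHat₂ c₁ → |ξ x| ≤ 1 / 2)
    (hmap : Set.MapsTo f (Set.Ioc cHat₂ c₁) (Set.Ico c₂ cHat₂)) :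
    (∀ k, 1 ≤ k → |ξ (f^[k] c)| = 1 → |ξ (f^[k + 1] c)| ≤ 1 / 2) ∧
    (∀ n, 1 ≤ n → |∏ k ∈ Finset.Icc 1 (2 * n), ξ (f^[k] c)| ≤ (1 / 2 : ℝ) ^ n) ∧
    Summable (fun n : ℕ => |∏ k ∈ Finset.Icc 1 n, ξ (f^[k] c)|) := by
  have hmap' : MapsTo f (Ioc cHat₂ c₁) (Ioc cHat₂ c₁)ᶜ :=
    hmap.mono_right fun y hy hy' ↦ hy.2.not_gt hy'.1
  have horbit (k : ℕ) : f^[k] c ∈ Icc c₂ c₁ := hf.iterate k hc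
  have hpair (m : ℕ) :
      |ξ (f^[2 * m + 1] c) * ξ (f^[2 * m + 2] c)| ≤ 1 / 2 := by
    rw [Function.iterate_succ_apply' f (2 * m + 1)]
    exact abs_mul_comp_le_half hf hξbd hξhalf hmap' (horbit _)
  refine ⟨fun k _ hk ↦ ?_, fun n _ ↦ abs_prod_Icc_two_mul_le_pow hpair n,
    summable_abs_prod_Icc (by norm_num) hpair fun k ↦ hξbd _ (horbit k)⟩
  rw [Function.iterate_succ_apply']
  exact abs_comp_le_half_of_abs_eq_one hf hξhalf hmap' (horbit k) hk

theorem stmt15 (c₂ c₁ cHat₂ c : ℝ) (h1 : c₂ ≤ cHat₂) (h2 : cHat₂ ≤ c₁)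
    (hc : c ∈ Set.Icc c₂ c₁) (f ξ : ℝ → ℝ)
    (hf : Set.MapsTo f (Set.Icc c₂ c₁) (Set.Icc c₂ c₁))
    (hξbd : ∀ x ∈ Set.Icc c₂ c₁, |ξ x| ≤ 1)
    (hξone : ∀ x ∈ Set.Ioc cHat₂ c₁, ξ x = -1)
    (hξhalf : ∀ x ∈ Set.Icc c₂ c₁, x ∉ Set.Ioc cHat₂ c₁ → |ξ x| ≤ 1 / 2)
    (hmap : Set.MapsTo f (Set.Ioc cHat₂ c₁) (Set.Ico c₂ cHat₂)) :
    (∀ k, 1 ≤ k → |ξ (f^[k] c)| = 1 → |ξ (f^[k + 1] c)| ≤ 1 / 2) ∧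
    (∀ n, 1 ≤ n → |∏ k ∈ Finset.Icc 1 (2 * n), ξ (f^[k] c)| ≤ (1 / 2 : ℝ) ^ n) ∧
    Summable (fun n : ℕ => |∏ k ∈ Finset.Icc 1 n, ξ (f^[k] c)|) :=
  stmt15_general c₂ c₁ cHat₂ c hc f ξ hf hξbd hξhalf hmap
end

section
/- Let h: I → ℝ be a monotone function on an interval I, let a ∈ I, and let (Δ_n) be a sequence decreasing to 0 with lim_{n→∞} log Δ_{n+1} / log Δ_n = 1 and a + Δ_n ∈ I. Then limsup_{Δ→0⁺} log|h(a+Δ) - h(a)| / log Δ = limsup_{n→∞} log|h(a+Δ_n) - h(a)| / log Δ_n, and the same holds with liminf in place of limsup. -/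
/-!
Write `u n = log g(Δ n) / log Δ n` with `g d = |h (a + d) - h a|`, monotone in `d > 0`. For
`Δ (n+1) ≤ d < Δ n` monotonicity gives `u n · (log Δ n / log d) ≤ log g(d) / log d ≤
u (n+1) · (log Δ (n+1) / log d)`, and both correction factors are squeezed between `1` and
`log Δ (n+1) / log Δ n → 1` (or its inverse). Hence every eventual upper or lower bound of `u`
becomes, after an arbitrarily small loss, an eventual bound of the quotient as `d → 0⁺`; since the
real `limsup` and `liminf` are determined by the sets of eventual bounds, they agree. The case
`g (Δ n) = 0` is separate: then both quotients are eventually the junk value `log 0 / log d = 0`.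
-/

open Filter Real Set Topology

theorem Real.limsup_neg {α : Type*} (f : α → ℝ) (F : Filter α) :
    limsup (fun x => -f x) F = -liminf f F := by
  rw [limsup_eq, liminf_eq, ← Real.sInf_neg]
  congr 1
  ext a
  simp [neg_le]

section Transfer

variable {α β : Type*} {F : Filter α} {G : Filter β} {φ : α → ℝ} {Δ : β → α}

theorem limsup_eq_limsup_comp_of_transfer (hΔ : Tendsto Δ G F)
    (htr : ∀ b c, b < c → (∀ᶠ n in G, φ (Δ n) ≤ b) → ∀ᶠ x in F, φ x ≤ c) :
    limsup φ F = limsup (fun n => φ (Δ n)) G := by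
  rw [limsup_eq, limsup_eq]
  set T := {a | ∀ᶠ x in F, φ x ≤ a}
  set S := {a | ∀ᶠ n in G, φ (Δ n) ≤ a}
  have hTS : T ⊆ S := fun a ha => hΔ.eventually ha
  have hST : ∀ b ∈ S, ∀ c, b < c → c ∈ T := fun b hb c hbc => htr b c hbc hb
  rcases S.eq_empty_or_nonempty with hS | ⟨b, hb⟩
  · rw [hS, subset_empty_iff.1 (hS ▸ hTS : T ⊆ ∅)]
  by_cases hbdd : BddBelow S
  · apply le_antisymm
    · refine le_of_forall_gt_imp_ge_of_dense fun c hc => ?_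
      obtain ⟨b', hb', hb'c⟩ := exists_lt_of_csInf_lt ⟨b, hb⟩ hc
      exact csInf_le (hbdd.mono hTS) (hST b' hb' c hb'c)
    · exact csInf_le_csInf hbdd ⟨b + 1, hST b hb _ (lt_add_one b)⟩ hTS
  · have hbddT : ¬BddBelow T := fun ⟨m, hm⟩ =>
      hbdd ⟨m - 1, fun b hb => by linarith [hm (hST b hb _ (lt_add_one b))]⟩
    rw [Real.sInf_of_not_bddBelow hbdd, Real.sInf_of_not_bddBelow hbddT]

theorem liminf_eq_liminf_comp_of_transfer (hΔ : Tendsto Δ G F)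
    (htr : ∀ b c, c < b → (∀ᶠ n in G, b ≤ φ (Δ n)) → ∀ᶠ x in F, c ≤ φ x) :
    liminf φ F = liminf (fun n => φ (Δ n)) G := by
  have h := limsup_eq_limsup_comp_of_transfer (φ := fun x => -φ x) hΔ fun b c hbc hb => by
    simpa only [neg_le] using htr (-b) (-c) (neg_lt_neg hbc) (by simpa only [neg_le] using hb)
  rwa [Real.limsup_neg, Real.limsup_neg (fun n => φ (Δ n)), neg_inj] at h

end Transfer

theorem exists_apply_succ_le_and_lt_apply {β : Type*} [LinearOrder β] {Δ : ℕ → β} {d : β}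
    {N : ℕ} (hN : d < Δ N) (hd : ∀ᶠ m in atTop, Δ m ≤ d) :
    ∃ n, N ≤ n ∧ Δ (n + 1) ≤ d ∧ d < Δ n := by
  classical
  obtain ⟨M, hM⟩ := eventually_atTop.1 hd
  have hex : ∃ k, Δ (N + k) ≤ d := ⟨M, hM _ (Nat.le_add_left M N)⟩
  have hfind : Nat.find hex ≠ 0 := fun h => (Nat.find_spec hex).not_gt (by rwa [h])
  obtain ⟨k, hk⟩ := Nat.exists_eq_succ_of_ne_zero hfind
  refine ⟨N + k, Nat.le_add_right N k, ?_, not_le.1 (Nat.find_min hex ?_)⟩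
  · have h := Nat.find_spec hex
    rw [hk] at h
    exact h
  · omega

theorem exists_one_lt_mul_le {b c : ℝ} (h : b < c) : ∃ S, 1 < S ∧ b * S ≤ c := by
  have hpos : 0 < |b| + 1 := by positivity
  refine ⟨1 + (c - b) / (|b| + 1), by linarith [div_pos (sub_pos.2 h) hpos], ?_⟩
  have hε : b * ((c - b) / (|b| + 1)) ≤ c - b := by
    rw [mul_div_assoc', div_le_iff₀ hpos]
    nlinarith [le_abs_self b, sub_pos.2 h]
  linarith

theorem mul_le_of_le_of_mem_Icc {u s b c S : ℝ} (hu : u ≤ b) (hs : s ∈ Icc 1 S)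
    (hbc : b ≤ c) (hbS : b * S ≤ c) : u * s ≤ c := by
  obtain ⟨hs1, hsS⟩ := hs
  rcases le_total 0 u with h | h <;> nlinarith

theorem le_mul_of_le_of_le_one_of_one_le_mul {u s b c S : ℝ} (hu : b ≤ u) (hs : s ≤ 1)
    (hsS : 1 ≤ s * S) (hS : 0 < S) (hcb : c ≤ b) (hcS : c * S ≤ b) : c ≤ u * s := by
  rcases le_total 0 u with h | h <;> nlinarith

section LogQuotient

variable {g : ℝ → ℝ} {x d y b c S : ℝ}

theorem log_div_log_le_of_bracket (hx : 0 < x) (hxd : x ≤ d) (hdy : d ≤ y) (hy : y < 1)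
    (hgx : 0 < g x) (hg : g x ≤ g d) (hS : log x / log y ≤ S) (hb : log (g x) / log x ≤ b)
    (hbc : b ≤ c) (hbS : b * S ≤ c) : log (g d) / log d ≤ c := by
  have hly : log y < 0 := log_neg (by linarith) hy
  have hldy : log d ≤ log y := log_le_log (by linarith) hdy
  have hlxd : log x ≤ log d := log_le_log hx hxd
  have hld : log d < 0 := hldy.trans_lt hly
  calc log (g d) / log d ≤ log (g x) / log d :=
        div_le_div_of_nonpos_of_le hld.le (log_le_log hgx hg)
    _ = log (g x) / log x * (log x / log d) := by field_simp [(hlxd.trans_lt hld).ne]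
    _ ≤ c := by
      refine mul_le_of_le_of_mem_Icc hb ⟨(one_le_div_of_neg hld).2 hlxd, le_trans ?_ hS⟩ hbc hbS
      rw [← neg_div_neg_eq (log x), ← neg_div_neg_eq (log x) (log y)]
      exact div_le_div_of_nonneg_left (by linarith) (by linarith) (by linarith)

theorem le_log_div_log_of_bracket (hx : 0 < x) (hxd : x ≤ d) (hdy : d ≤ y) (hy : y < 1)
    (hgd : 0 < g d) (hg : g d ≤ g y) (hS : log x / log y ≤ S) (hb : b ≤ log (g y) / log y)
    (hcb : c ≤ b) (hcS : c * S ≤ b) : c ≤ log (g d) / log d := by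
  have hly : log y < 0 := log_neg (by linarith) hy
  have hldy : log d ≤ log y := log_le_log (by linarith) hdy
  have hlxd : log x ≤ log d := log_le_log hx hxd
  have hld : log d < 0 := hldy.trans_lt hly
  have hr : 1 ≤ log x / log y := (one_le_div_of_neg hly).2 (hlxd.trans hldy)
  calc c ≤ log (g y) / log y * (log y / log d) := by
        refine le_mul_of_le_of_le_one_of_one_le_mul hb ((div_le_one_of_neg hld).2 hldy) ?_
          (by linarith) hcb hcS
        calc 1 ≤ log x / log d := (one_le_div_of_neg hld).2 hlxd
          _ = log y / log d * (log x / log y) := by field_simp [hly.ne]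
          _ ≤ log y / log d * S := by gcongr; exact div_nonneg_of_nonpos hly.le hld.le
    _ = log (g y) / log d := by field_simp [hly.ne]
    _ ≤ log (g d) / log d := div_le_div_of_nonpos_of_le hld.le (log_le_log hgd hg)

end LogQuotient

theorem eventually_exists_apply_succ_le_and_lt_apply {Δ : ℕ → ℝ} (hpos : ∀ n, 0 < Δ n)
    (hlim : Tendsto Δ atTop (𝓝 0)) {P : ℕ → Prop} (hP : ∀ᶠ n in atTop, P n) :
    ∀ᶠ d in 𝓝[>] 0, ∃ n, P n ∧ P (n + 1) ∧ Δ (n + 1) ≤ d ∧ d < Δ n := by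
  obtain ⟨N, hN⟩ := eventually_atTop.1 hP
  filter_upwards [Ioo_mem_nhdsGT (hpos N)] with d ⟨hd0, hdN⟩
  obtain ⟨n, hNn, hbracket⟩ :=
    exists_apply_succ_le_and_lt_apply hdN (hlim.eventually (eventually_le_nhds hd0))
  exact ⟨n, hN n hNn, hN (n + 1) (by omega), hbracket⟩

section MonotoneQuotient

variable {g : ℝ → ℝ} {Δ : ℕ → ℝ} (hpos : ∀ n, 0 < Δ n) (hanti : Antitone Δ)
  (hlim : Tendsto Δ atTop (𝓝 0))
  (hratio : Tendsto (fun n => log (Δ (n + 1)) / log (Δ n)) atTop (𝓝 1))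
  (hg : MonotoneOn g (Ioc 0 (Δ 0)))
include hpos hanti hlim hratio hg

theorem eventually_log_div_log_le (hgpos : ∀ d ∈ Ioc 0 (Δ 0), 0 < g d) {b c : ℝ} (hbc : b < c)
    (hb : ∀ᶠ n in atTop, log (g (Δ n)) / log (Δ n) ≤ b) :
    ∀ᶠ d in 𝓝[>] 0, log (g d) / log d ≤ c := by
  obtain ⟨S, hS1, hbS⟩ := exists_one_lt_mul_le hbc
  have hr := hratio.eventually (eventually_le_nhds hS1)
  have h1 := hlim.eventually (eventually_lt_nhds one_pos)
  filter_upwards [eventually_exists_apply_succ_le_and_lt_apply hpos hlim (hb.and (hr.and h1))]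
    with d hbracket
  obtain ⟨n, ⟨-, hrn, hn1⟩, ⟨hbn, -⟩, hxd, hdy⟩ := hbracket
  have hmem : ∀ m, Δ m ∈ Ioc 0 (Δ 0) := fun m => ⟨hpos m, hanti (Nat.zero_le m)⟩
  have hd : d ∈ Ioc 0 (Δ 0) := ⟨(hpos _).trans_le hxd, hdy.le.trans (hmem n).2⟩
  exact log_div_log_le_of_bracket (hpos _) hxd hdy.le hn1 (hgpos _ (hmem _))
    (hg (hmem _) hd hxd) hrn hbn hbc.le hbS

theorem eventually_le_log_div_log (hgpos : ∀ d ∈ Ioc 0 (Δ 0), 0 < g d) {b c : ℝ} (hcb : c < b)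
    (hb : ∀ᶠ n in atTop, b ≤ log (g (Δ n)) / log (Δ n)) :
    ∀ᶠ d in 𝓝[>] 0, c ≤ log (g d) / log d := by
  obtain ⟨S, hS1, hcS⟩ := exists_one_lt_mul_le hcb
  have hr := hratio.eventually (eventually_le_nhds hS1)
  have h1 := hlim.eventually (eventually_lt_nhds one_pos)
  filter_upwards [eventually_exists_apply_succ_le_and_lt_apply hpos hlim (hb.and (hr.and h1))]
    with d hbracket
  obtain ⟨n, ⟨hbn, hrn, hn1⟩, -, hxd, hdy⟩ := hbracket
  have hmem : ∀ m, Δ m ∈ Ioc 0 (Δ 0) := fun m => ⟨hpos m, hanti (Nat.zero_le m)⟩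
  have hd : d ∈ Ioc 0 (Δ 0) := ⟨(hpos _).trans_le hxd, hdy.le.trans (hmem n).2⟩
  exact le_log_div_log_of_bracket (hpos _) hxd hdy.le hn1 (hgpos _ hd)
    (hg hd (hmem _) hdy.le) hrn hbn hcb.le hcS

theorem limsup_log_div_log_eq_and_liminf (hg0 : ∀ d ∈ Ioc 0 (Δ 0), 0 ≤ g d) :
    limsup (fun d => log (g d) / log d) (𝓝[>] 0)
      = limsup (fun n => log (g (Δ n)) / log (Δ n)) atTop ∧
    liminf (fun d => log (g d) / log d) (𝓝[>] 0)
      = liminf (fun n => log (g (Δ n)) / log (Δ n)) atTop := by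
  have hΔ : Tendsto Δ atTop (𝓝[>] 0) := tendsto_nhdsWithin_iff.2 ⟨hlim, .of_forall hpos⟩
  have hmem : ∀ m, Δ m ∈ Ioc 0 (Δ 0) := fun m => ⟨hpos m, hanti (Nat.zero_le m)⟩
  by_cases hz : ∃ n, g (Δ n) = 0
  · obtain ⟨n, hn⟩ := hz
    have hφ : (fun d => log (g d) / log d) =ᶠ[𝓝[>] 0] fun _ => 0 := by
      filter_upwards [Ioc_mem_nhdsGT (hpos n)] with d hd
      have hd0 : d ∈ Ioc 0 (Δ 0) := ⟨hd.1, hd.2.trans (hmem n).2⟩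
      have : g d = 0 := le_antisymm (hn ▸ hg hd0 (hmem n) hd.2) (hg0 d hd0)
      simp [this]
    have hu := hΔ.eventually hφ
    rw [limsup_congr hφ, limsup_congr hu, liminf_congr hφ, liminf_congr hu]
    simp
  · rw [not_exists] at hz
    have hgpos : ∀ d ∈ Ioc 0 (Δ 0), 0 < g d := fun d hd => by
      obtain ⟨m, hm⟩ := (hlim.eventually (eventually_lt_nhds hd.1)).exists
      exact ((hg0 _ (hmem m)).lt_of_ne (Ne.symm (hz m))).trans_le (hg (hmem m) hd hm.le)
    exact ⟨limsup_eq_limsup_comp_of_transfer hΔ fun b c hbc hb =>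
        eventually_log_div_log_le hpos hanti hlim hratio hg hgpos hbc hb,
      liminf_eq_liminf_comp_of_transfer hΔ fun b c hcb hb =>
        eventually_le_log_div_log hpos hanti hlim hratio hg hgpos hcb hb⟩

end MonotoneQuotient

theorem monotoneOn_abs_sub_of_monotoneOn_or_antitoneOn {I : Set ℝ} {h : ℝ → ℝ} {a : ℝ}
    (hmono : MonotoneOn h I ∨ AntitoneOn h I) (ha : a ∈ I) :
    MonotoneOn (fun x => |h x - h a|) (I ∩ Ici a) := by
  have of_monotoneOn :
      ∀ f : ℝ → ℝ, MonotoneOn f I → MonotoneOn (fun x => |f x - f a|) (I ∩ Ici a) :=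
    fun f hf x hx y hy hxy => by
      have hax := hf ha hx.1 hx.2
      have hxy' := hf hx.1 hy.1 hxy
      simp only
      rw [abs_of_nonneg (by linarith), abs_of_nonneg (by linarith)]
      linarith
  rcases hmono with hm | hm
  · exact of_monotoneOn h hm
  · simpa [abs_sub_comm, neg_add_eq_sub] using of_monotoneOn (-h) hm.neg

theorem stmt17 (I : Set ℝ) (hI : I.OrdConnected) (h : ℝ → ℝ)
    (hmono : MonotoneOn h I ∨ AntitoneOn h I) (a : ℝ) (ha : a ∈ I)
    (Δ : ℕ → ℝ) (hpos : ∀ n, 0 < Δ n) (hanti : StrictAnti Δ)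
    (hlim : Filter.Tendsto Δ Filter.atTop (nhds 0))
    (hratio : Filter.Tendsto (fun n => Real.log (Δ (n + 1)) / Real.log (Δ n))
      Filter.atTop (nhds 1))
    (hmem : ∀ n, a + Δ n ∈ I) :
    Filter.limsup (fun d => Real.log |h (a + d) - h a| / Real.log d)
        (nhdsWithin 0 (Set.Ioi 0))
      = Filter.limsup (fun n => Real.log |h (a + Δ n) - h a| / Real.log (Δ n))
        Filter.atTop ∧
    Filter.liminf (fun d => Real.log |h (a + d) - h a| / Real.log d)
        (nhdsWithin 0 (Set.Ioi 0))
      = Filter.liminf (fun n => Real.log |h (a + Δ n) - h a| / Real.log (Δ n))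
        Filter.atTop := by
  have hshift : MapsTo (a + ·) (Ioc 0 (Δ 0)) (I ∩ Ici a) := fun d ⟨hd0, hdΔ⟩ =>
    ⟨hI.out ha (hmem 0) ⟨by simp [hd0.le], by simp [hdΔ]⟩, by simp [hd0.le]⟩
  have hg : MonotoneOn (fun d => |h (a + d) - h a|) (Ioc 0 (Δ 0)) :=
    (monotoneOn_abs_sub_of_monotoneOn_or_antitoneOn hmono ha).comp
      (fun _ _ _ _ hde => (add_le_add_iff_left a).2 hde) hshift
  exact limsup_log_div_log_eq_and_liminf hpos hanti.antitone hlim hratio hg fun _ _ => abs_nonneg _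
end
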